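/- Let θ_0,…,θ_M be M+1 distinct real nodes with θ_0 = 0, and let D_M be the M×M matrix obtained from the differentiation matrix D̂_M by removing its first row and first column. Then D_M is invertible. -/

import Mathlib

/-!
A kernel vector `x` of `D` gives the interpolant `p` of the values `(0, x)` at the nodes, of
degree `≤ M`. `D x = 0` says that `p'` vanishes at the `M` nodes `θ_1, …, θ_M`, while
`deg p' < M`; so `p' = 0`, `p` is constant, and `p(θ_0) = 0` forces `p = 0`, i.e. `x = 0`.
-/

open Finset Polynomial

theorem Polynomial.eq_zero_of_eval_eq_zero_of_derivative_eval_eq_zero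
    {R ι : Type*} [CommRing R] [IsDomain R] [CharZero R] [Fintype ι]
    {v : ι → R} (hv : Function.Injective v) {p : R[X]} (hdeg : p.degree < Fintype.card ι)
    {i₀ : ι} (h₀ : p.eval (v i₀) = 0) (hder : ∀ i ≠ i₀, (derivative p).eval (v i) = 0) :
    p = 0 := by
  classical
  have hconst : p.natDegree = 0 := by
    by_contra hn
    have hp : p ≠ 0 := by rintro rfl; exact hn natDegree_zero
    have hcard : (derivative p).natDegree < Fintype.card {i // i ≠ i₀} := by
      have hlt := (natDegree_lt_iff_degree_lt hp).2 hdeg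
      have hder_lt := natDegree_derivative_lt hn
      simp only [ne_eq, Fintype.card_subtype_compl, Fintype.card_unique]
      omega
    exact hn <| derivative_eq_zero.1 <| eq_zero_of_natDegree_lt_card_of_eval_eq_zero _
      (hv.comp Subtype.val_injective) (fun i => hder i.1 i.2) hcard
  rw [eq_C_of_natDegree_eq_zero hconst, eval_C] at h₀
  rw [eq_C_of_natDegree_eq_zero hconst, h₀, map_zero]

theorem Lagrange.eval_derivative_interpolate {F ι : Type*} [Field F] [DecidableEq ι]
    (s : Finset ι) (v : ι → F) (r : ι → F) (x : F) :
    (derivative (Lagrange.interpolate s v r)).eval x =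
      ∑ j ∈ s, r j * (derivative (Lagrange.basis s v j)).eval x := by
  simp only [Lagrange.interpolate_apply, derivative_sum, derivative_C_mul, eval_finsetSum,
    eval_mul, eval_C]

theorem reduced_differentiation_matrix_invertible_general
    (M : ℕ) (θn : Fin (M + 1) → ℝ) (hθ : Function.Injective θn)
    (Dhat : Matrix (Fin (M + 1)) (Fin (M + 1)) ℝ)
    (hD : ∀ i j, Dhat i j =
      (Polynomial.derivative (Lagrange.basis Finset.univ θn j)).eval (θn i))
    (D : Matrix (Fin M) (Fin M) ℝ)
    (hDM : ∀ i j, D i j = Dhat i.succ j.succ) :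
    IsUnit D.det := by
  rw [isUnit_iff_ne_zero]
  intro hdet
  obtain ⟨x, hx, hDx⟩ := Matrix.exists_mulVec_eq_zero_iff.2 hdet
  set p := Lagrange.interpolate univ θn (Fin.cons 0 x : Fin (M + 1) → ℝ)
  have hnodes (k : Fin (M + 1)) : p.eval (θn k) = (Fin.cons 0 x : Fin (M + 1) → ℝ) k :=
    Lagrange.eval_interpolate_at_node _ hθ.injOn (mem_univ k)
  have hder (k : Fin M) : (derivative p).eval (θn k.succ) = D.mulVec x k := by
    rw [Lagrange.eval_derivative_interpolate, Fin.sum_univ_succ]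
    simp [Matrix.mulVec, dotProduct, hDM, hD, mul_comm]
  have hp : p = 0 := by
    refine eq_zero_of_eval_eq_zero_of_derivative_eval_eq_zero hθ
      ((Lagrange.degree_interpolate_lt _ hθ.injOn).trans_eq (by simp)) (hnodes 0) fun i hi => ?_
    obtain ⟨k, rfl⟩ := Fin.exists_succ_eq.2 hi
    rw [hder, hDx, Pi.zero_apply]
  exact hx (funext fun k => by simpa [hp] using (hnodes k.succ).symm)

/-- If `θ_0 = 0`, the matrix `D_M` obtained from the differentiation matrix `D̂_M`
by removing the first row and first column is invertible. -/
theorem reduced_differentiation_matrix_invertible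
    (M : ℕ) (hM : 1 ≤ M) (θn : Fin (M + 1) → ℝ) (hθ : Function.Injective θn)
    (hθ0 : θn 0 = 0)
    (Dhat : Matrix (Fin (M + 1)) (Fin (M + 1)) ℝ)
    (hD : ∀ i j, Dhat i j =
      (Polynomial.derivative (Lagrange.basis Finset.univ θn j)).eval (θn i))
    (D : Matrix (Fin M) (Fin M) ℝ)
    (hDM : ∀ i j, D i j = Dhat i.succ j.succ) :
    IsUnit D.det :=
  reduced_differentiation_matrix_invertible_general M θn hθ Dhat hD D hDM
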